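/- Define D_n^u = ∂_1^u ∂_2^u ··· ∂_{n-1}^u (Demazure operators in variables u_1,...,u_n). Then D_n^u(u_n^{n-1}) = (-1)^{n-1}. More generally, for P = Σ_r u_n^r P_r with each P_r ∈ k[v_1,...,v_n]^{S_n} (a polynomial in u_n with symmetric-in-v coefficients), the evaluation at u_1 = ··· = u_n = 0 of D_n^u(P) equals (-1)^{n-1} P_{n-1}. -/

import Mathlib

/-!
The divided difference `∂_r` sends `h_{d+1}(u_{r+1}, …, u_n)` to `-h_d(u_r, …, u_n)`, where `h_d`
is the complete homogeneous symmetric polynomial, because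
`h_{d+1}(x, S) - h_{d+1}(y, S) = (x - y) h_d(y, x, S)`. Starting from `u_n^d = h_d(u_n)` and
applying `∂_{n-1}, …, ∂_1` in turn gives `D_n^u(u_n^d) = (-1)^{n-1} h_{d-n+1}(u_1, …, u_n)` (and
`0` when `d < n - 1`), which at `u = 0` vanishes unless `d = n - 1`. The `∂_r` are linear over
the polynomials in `v`, which the swaps of `u`-variables fix.
-/

open MvPolynomial

def DComp {A : Type*} (D : ℕ → A → A) : List ℕ → A → A
  | [], P => P
  | r :: L, P => D r (DComp D L P)

section DComp

variable {A : Type*} {D : ℕ → A → A}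

theorem DComp_append (L₁ L₂ : List ℕ) (P : A) :
    DComp D (L₁ ++ L₂) P = DComp D L₁ (DComp D L₂ P) := by
  induction L₁ with
  | nil => rfl
  | cons r L ih => exact congrArg (D r) ih

theorem DComp_add [Add A] {L : List ℕ} (hD : ∀ r ∈ L, ∀ P Q, D r (P + Q) = D r P + D r Q)
    (P Q : A) : DComp D L (P + Q) = DComp D L P + DComp D L Q := by
  induction L with
  | nil => rfl
  | cons r L ih =>
    rw [List.forall_mem_cons] at hD
    simp only [DComp, ih hD.2, hD.1]

theorem DComp_zero [AddGroup A] {L : List ℕ}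
    (hD : ∀ r ∈ L, ∀ P Q, D r (P + Q) = D r P + D r Q) : DComp D L 0 = 0 :=
  map_zero (AddMonoidHom.mk' _ (DComp_add hD))

theorem DComp_neg [AddGroup A] {L : List ℕ}
    (hD : ∀ r ∈ L, ∀ P Q, D r (P + Q) = D r P + D r Q) (P : A) : DComp D L (-P) = -DComp D L P :=
  map_neg (AddMonoidHom.mk' _ (DComp_add hD)) P

theorem DComp_sum [AddCommGroup A] {L : List ℕ}
    (hD : ∀ r ∈ L, ∀ P Q, D r (P + Q) = D r P + D r Q) {ι : Type*} (s : Finset ι) (f : ι → A) :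
    DComp D L (∑ i ∈ s, f i) = ∑ i ∈ s, DComp D L (f i) :=
  map_sum (AddMonoidHom.mk' _ (DComp_add hD)) f s

theorem DComp_mul_right [Mul A] {L : List ℕ} {c : A} (hD : ∀ r ∈ L, ∀ P, D r (P * c) = D r P * c)
    (P : A) : DComp D L (P * c) = DComp D L P * c := by
  induction L with
  | nil => rfl
  | cons r L ih =>
    rw [List.forall_mem_cons] at hD
    simp only [DComp, ih hD.2, hD.1]

end DComp

section DividedDifference

variable {R F : Type*} [CommRing R] [FunLike F R R]

def IsDividedDifference (x y : R) (σ : F) (δ : R → R) : Prop :=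
  ∀ P, (x - y) * δ P = P - σ P

namespace IsDividedDifference

variable {x y : R} {σ : F} {δ : R → R}

theorem eq_of_mul_eq (hδ : IsDividedDifference x y σ δ) (hxy : IsLeftRegular (x - y))
    {P Q : R} (h : (x - y) * Q = P - σ P) : δ P = Q :=
  hxy ((hδ P).trans h.symm)

theorem map_add [RingHomClass F R R] (hδ : IsDividedDifference x y σ δ)
    (hxy : IsLeftRegular (x - y)) (P Q : R) : δ (P + Q) = δ P + δ Q :=
  hδ.eq_of_mul_eq hxy (by rw [mul_add, hδ P, hδ Q, _root_.map_add]; ring)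

theorem map_mul_of_map_eq [RingHomClass F R R] (hδ : IsDividedDifference x y σ δ)
    (hxy : IsLeftRegular (x - y)) {c : R} (hc : σ c = c) (P : R) : δ (P * c) = δ P * c :=
  hδ.eq_of_mul_eq hxy (by rw [← mul_assoc, hδ P, _root_.map_mul, hc]; ring)

theorem eq_zero_of_map_eq (hδ : IsDividedDifference x y σ δ) (hxy : IsLeftRegular (x - y))
    {P : R} (hP : σ P = P) : δ P = 0 :=
  hδ.eq_of_mul_eq hxy (by rw [hP, mul_zero, sub_self])

end IsDividedDifference

end DividedDifference

namespace List

variable {R S : Type*} [CommRing R] [CommRing S]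

/-- The complete homogeneous symmetric polynomial of degree `d`, evaluated at the entries of
the list. -/
def hsymm : List R → ℕ → R
  | [], d => if d = 0 then 1 else 0
  | _ :: _, 0 => 1
  | x :: xs, d + 1 => hsymm xs (d + 1) + x * hsymm (x :: xs) d

@[simp]
theorem hsymm_zero (xs : List R) : xs.hsymm 0 = 1 := by
  cases xs <;> simp [hsymm]

theorem hsymm_singleton (x : R) (d : ℕ) : [x].hsymm d = x ^ d := by
  induction d with
  | zero => simp
  | succ d ih => simp [hsymm, ih, pow_succ, mul_comm]

theorem map_hsymm {F : Type*} [FunLike F R S] [RingHomClass F R S] (f : F) (xs : List R)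
    (d : ℕ) : f (xs.hsymm d) = (xs.map f).hsymm d := by
  induction xs generalizing d with
  | nil => cases d <;> simp [hsymm]
  | cons x xs ih =>
    induction d with
    | zero => simp
    | succ d ihd => simp only [hsymm, _root_.map_add, _root_.map_mul, ih, ihd, List.map_cons]

theorem hsymm_of_forall_eq_zero {xs : List R} (h : ∀ x ∈ xs, x = 0) (d : ℕ) :
    xs.hsymm d = if d = 0 then 1 else 0 := by
  induction xs with
  | nil => simp [hsymm]
  | cons x xs ih =>
    rw [List.forall_mem_cons] at h
    cases d with
    | zero => simp
    | succ d => simp [hsymm, ih h.2, h.1]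

theorem hsymm_cons_sub_hsymm_cons (x y : R) (xs : List R) (d : ℕ) :
    (x :: xs).hsymm (d + 1) - (y :: xs).hsymm (d + 1) = (x - y) * (y :: x :: xs).hsymm d := by
  induction d with
  | zero => simp [hsymm]
  | succ d ih =>
    rw [hsymm.eq_3 x, hsymm.eq_3 y, hsymm.eq_3 y (x :: xs)]
    linear_combination y * ih

end List

section Demazure

variable (k : Type*) [CommRing k] {n : ℕ}

/-- The list `[u_{j+1}, …, u_n]`, where `u_{i+1}` is `X (inl i)` for `i : Fin n`. -/
noncomputable def uTail (n j : ℕ) : List (MvPolynomial (Fin n ⊕ Fin n) k) :=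
  ((List.finRange n).drop j).map (X ∘ Sum.inl)

theorem uTail_of_lt {j : ℕ} (hj : j < n) :
    uTail k n j = X (Sum.inl ⟨j, hj⟩) :: uTail k n (j + 1) := by
  rw [uTail, List.drop_eq_getElem_cons (by simpa using hj)]
  simp [uTail]

theorem uTail_self : uTail k n n = [] := by
  simp [uTail]

theorem map_rename_swap_uTail {r : ℕ} (hr : r + 1 < n) :
    (uTail k n (r + 2)).map
        (rename (Equiv.swap (Sum.inl (⟨r, Nat.lt_of_succ_lt hr⟩ : Fin n)) (Sum.inl ⟨r + 1, hr⟩))) =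
      uTail k n (r + 2) := by
  refine (List.map_congr_left fun P hP => ?_).trans (List.map_id _)
  obtain ⟨i, hi, rfl⟩ := List.mem_map.1 hP
  obtain ⟨j, hj, rfl⟩ := List.mem_drop_iff_getElem.1 hi
  refine (rename_X _ _).trans (congrArg X (Equiv.swap_apply_of_ne_of_ne ?_ ?_)) <;>
    (simp [Fin.ext_iff]; omega)

theorem aeval_hsymm_uTail (j d : ℕ) :
    aeval (Sum.elim (fun _ => (0 : MvPolynomial (Fin n) k)) X) ((uTail k n j).hsymm d) =
      if d = 0 then 1 else 0 := by
  rw [List.map_hsymm]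
  refine List.hsymm_of_forall_eq_zero (fun P hP => ?_) d
  obtain ⟨_, hi, rfl⟩ := List.mem_map.1 hP
  obtain ⟨_, _, rfl⟩ := List.mem_map.1 hi
  simp

theorem isLeftRegular_X_sub_X {σ : Type*} [IsDomain k] {i j : σ} (hij : i ≠ j) :
    IsLeftRegular (X i - X j : MvPolynomial σ k) :=
  IsLeftCancelMulZero.mul_left_cancel_of_ne_zero (sub_ne_zero.2 ((X_injective (R := k)).ne hij))

/-- `D r` is the Demazure operator `∂_{r+1}^u` for every `r + 1 < n`. -/
def IsDemazureU (D : ℕ → MvPolynomial (Fin n ⊕ Fin n) k → MvPolynomial (Fin n ⊕ Fin n) k) :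
    Prop :=
  ∀ r (hr : r + 1 < n),
    IsDividedDifference (X (Sum.inl (⟨r, Nat.lt_of_succ_lt hr⟩ : Fin n)))
      (X (Sum.inl ⟨r + 1, hr⟩))
      (rename (Equiv.swap (Sum.inl (⟨r, Nat.lt_of_succ_lt hr⟩ : Fin n)) (Sum.inl ⟨r + 1, hr⟩)))
      (D r)

namespace IsDemazureU

variable {k} [IsDomain k]
  {D : ℕ → MvPolynomial (Fin n ⊕ Fin n) k → MvPolynomial (Fin n ⊕ Fin n) k} {r : ℕ}

theorem isLeftRegular (hr : r + 1 < n) :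
    IsLeftRegular (X (Sum.inl (⟨r, Nat.lt_of_succ_lt hr⟩ : Fin n)) - X (Sum.inl ⟨r + 1, hr⟩) :
      MvPolynomial (Fin n ⊕ Fin n) k) :=
  isLeftRegular_X_sub_X k (by simp)

theorem map_add_of_mem_range (hD : IsDemazureU k D) {m : ℕ} (hm : m < n) :
    ∀ r ∈ List.range m, ∀ P Q, D r (P + Q) = D r P + D r Q := fun r hr =>
  have hr : r + 1 < n := by have := List.mem_range.1 hr; omega
  (hD r hr).map_add (isLeftRegular hr)

theorem map_mul_rename_inr_of_mem_range (hD : IsDemazureU k D) {m : ℕ} (hm : m < n)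
    (Q : MvPolynomial (Fin n) k) :
    ∀ r ∈ List.range m, ∀ P, D r (P * rename Sum.inr Q) = D r P * rename Sum.inr Q := fun r hr =>
  have hr : r + 1 < n := by have := List.mem_range.1 hr; omega
  (hD r hr).map_mul_of_map_eq (isLeftRegular hr) (by rw [rename_rename]; congr 1)

theorem map_one (hD : IsDemazureU k D) (hr : r + 1 < n) : D r 1 = 0 :=
  (hD r hr).eq_zero_of_map_eq (isLeftRegular hr) (_root_.map_one _)

theorem map_hsymm_uTail (hD : IsDemazureU k D) (hr : r + 1 < n) (d : ℕ) :
    D r ((uTail k n (r + 1)).hsymm (d + 1)) = -(uTail k n r).hsymm d := by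
  refine (hD r hr).eq_of_mul_eq (isLeftRegular hr) ?_
  rw [List.map_hsymm, uTail_of_lt k hr, List.map_cons, map_rename_swap_uTail k hr, rename_X,
    Equiv.swap_apply_right, List.hsymm_cons_sub_hsymm_cons, uTail_of_lt k (by omega : r < n),
    uTail_of_lt k hr]
  ring

theorem DComp_range_hsymm_uTail (hD : IsDemazureU k D) {m : ℕ} (hm : m < n) (d : ℕ) :
    DComp D (List.range m) ((uTail k n m).hsymm d) =
      if m ≤ d then (-1) ^ m * (uTail k n 0).hsymm (d - m) else 0 := by
  induction m generalizing d with
  | zero => simp [DComp]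
  | succ m ih =>
    have hadd := hD.map_add_of_mem_range (m := m) (by omega)
    rw [List.range_succ, DComp_append]
    cases d with
    | zero =>
      rw [List.hsymm_zero, DComp, DComp, hD.map_one (by omega), DComp_zero hadd, if_neg (by omega)]
    | succ d =>
      rw [DComp, DComp, hD.map_hsymm_uTail (by omega), DComp_neg hadd, ih (by omega)]
      split_ifs <;> first | omega | simp [pow_succ]

theorem DComp_range_X_pow (hD : IsDemazureU k D) (hn : 0 < n) (d : ℕ) :
    DComp D (List.range (n - 1)) (X (Sum.inl (⟨n - 1, Nat.sub_one_lt_of_lt hn⟩ : Fin n)) ^ d) =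
      if n - 1 ≤ d then (-1) ^ (n - 1) * (uTail k n 0).hsymm (d - (n - 1)) else 0 := by
  have hX : (X (Sum.inl ⟨n - 1, Nat.sub_one_lt_of_lt hn⟩) : MvPolynomial (Fin n ⊕ Fin n) k) ^ d =
      (uTail k n (n - 1)).hsymm d := by
    rw [uTail_of_lt k (by omega), Nat.sub_add_cancel hn, uTail_self, List.hsymm_singleton]
  rw [hX, hD.DComp_range_hsymm_uTail (by omega)]

theorem aeval_DComp_range_X_pow (hD : IsDemazureU k D) (hn : 0 < n) (d : ℕ) :
    aeval (Sum.elim (fun _ => (0 : MvPolynomial (Fin n) k)) X) (DComp D (List.range (n - 1))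
        (X (Sum.inl (⟨n - 1, Nat.sub_one_lt_of_lt hn⟩ : Fin n)) ^ d)) =
      if d = n - 1 then (-1) ^ (n - 1) else 0 := by
  rw [hD.DComp_range_X_pow hn]
  by_cases hd : d = n - 1
  · rw [if_pos hd.ge, if_pos hd, map_mul, aeval_hsymm_uTail, if_pos (by omega)]
    simp
  · split_ifs
    · rw [map_mul, aeval_hsymm_uTail, if_neg (by omega), mul_zero]
    · exact map_zero _

end IsDemazureU

end Demazure

/-- Let `D_n^u = ∂_1^u ∂_2^u ⋯ ∂_{n-1}^u` be the composition of Demazure operators in the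
variables `u_1,…,u_n` (the `inl` variables of `k[u_1,…,u_n,v_1,…,v_n]`).  Then
`D_n^u(u_n^{n-1}) = (-1)^{n-1}`, and for `P = Σ_r u_n^r P_r` with each `P_r` a symmetric
polynomial in the `v`-variables, the evaluation at `u_1 = ⋯ = u_n = 0` of `D_n^u(P)`
equals `(-1)^{n-1} P_{n-1}`. -/
theorem demazure_u_evaluation (k : Type*) [CommRing k] [IsDomain k] (n : ℕ) (hn : 0 < n)
    (Du : ℕ → MvPolynomial (Fin n ⊕ Fin n) k → MvPolynomial (Fin n ⊕ Fin n) k)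
    (hDu : ∀ (r : ℕ) (hr : r + 1 < n) (P : MvPolynomial (Fin n ⊕ Fin n) k),
      (X (Sum.inl (⟨r, by omega⟩ : Fin n)) - X (Sum.inl ⟨r + 1, hr⟩)) * Du r P
        = P - rename (Equiv.swap (Sum.inl (⟨r, by omega⟩ : Fin n))
            (Sum.inl (⟨r + 1, hr⟩ : Fin n))) P) :
    DComp Du (List.range (n - 1))
        ((X (Sum.inl (⟨n - 1, by omega⟩ : Fin n)) : MvPolynomial (Fin n ⊕ Fin n) k) ^ (n - 1))
      = (-1 : MvPolynomial (Fin n ⊕ Fin n) k) ^ (n - 1) ∧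
    ∀ (N : ℕ) (Pr : ℕ → MvPolynomial (Fin n) k), (∀ r, (Pr r).IsSymmetric) →
      aeval (Sum.elim (fun _ => (0 : MvPolynomial (Fin n) k)) (fun j => X j))
          (DComp Du (List.range (n - 1))
            (∑ r ∈ Finset.range N,
              X (Sum.inl (⟨n - 1, by omega⟩ : Fin n)) ^ r * rename Sum.inr (Pr r)))
        = (-1 : MvPolynomial (Fin n) k) ^ (n - 1) *
            (if n - 1 < N then Pr (n - 1) else 0) := by
  have hD : IsDemazureU k Du := hDu
  refine ⟨by simpa using hD.DComp_range_X_pow hn (n - 1), fun N Pr _ => ?_⟩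
  have hterm (r : ℕ) : aeval (Sum.elim (fun _ => 0) X) (DComp Du (List.range (n - 1))
      (X (Sum.inl (⟨n - 1, by omega⟩ : Fin n)) ^ r * rename Sum.inr (Pr r))) =
        if r = n - 1 then (-1) ^ (n - 1) * Pr r else 0 := by
    rw [DComp_mul_right (hD.map_mul_rename_inr_of_mem_range (m := n - 1) (by omega) (Pr r)),
      map_mul, hD.aeval_DComp_range_X_pow hn, aeval_rename, Sum.elim_comp_inr,
      aeval_X_left_apply, ite_mul, zero_mul]
  rw [DComp_sum (hD.map_add_of_mem_range (by omega)), map_sum]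
  simp only [hterm, Finset.sum_ite_eq', Finset.mem_range, mul_ite, mul_zero]
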